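/- Set c² = 2. Define g(μ) = 2^{⌊μ/2⌋}(2⌊(μ−1)/2⌋+1)!!/⌊(μ−1)/2⌋! for integers μ ≥ 1 and g(0) = 1; define C̃_{0,3}(a, b, d) = (1/2)(1 + (−1)^{a+b+d}) g(a)g(b)g(d) for integers a, b, d ≥ 0; define C_{1,1}(m) = 2^{(m−4)/2}(m−1)!!/(3·((m−4)/2)!) for even integers m ≥ 4 and C_{1,1}(m) = 0 otherwise. For an integer m ≥ 1 define G(m) = −(2/3!)·( Σ_{i+j+k=m, i,j,k ≥ 1} C̃_{0,3}(i,j,k)/(ijk) + (3/2)·Σ_{i+j=m, i,j ≥ 1} C̃_{0,3}(i,j,0)/(ij) + (3/(4m))·C̃_{0,3}(0,0,m) ) − 2·C_{1,1}(m)/m. Then for all real x > √2, (x³ − 12x)/(48(x² − 2)^{3/2}) = 1/48 + (1/2)·Σ_{k=1}^{∞} G(2k)·(2x²)^{−k}, the series on the right converging for x > √2. -/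

import Mathlib

/-- The compositions of `m` into `n` strictly positive parts, as a finset of
ordered `n`-tuples. -/
def comps (n m : ℕ) : Finset (Fin n → ℕ) :=
  (Finset.Nat.antidiagonalTuple n m).filter fun μ => ∀ i, 1 ≤ μ i

/-- The double factorial. -/
def dfact : ℕ → ℕ
  | 0 => 1
  | 1 => 1
  | n + 2 => (n + 2) * dfact n

/-- `g(μ) = 2^⌊μ/2⌋ (2⌊(μ-1)/2⌋+1)!! / ⌊(μ-1)/2⌋!` for `μ ≥ 1`, and `g(0) = 1`. -/
noncomputable def gfun (μ : ℕ) : ℝ :=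
  if μ = 0 then 1
  else 2 ^ (μ / 2) * dfact (2 * ((μ - 1) / 2) + 1) / Nat.factorial ((μ - 1) / 2)

/-- `C̃_{0,3}(a,b,d) = (1/2)(1 + (-1)^{a+b+d}) g(a) g(b) g(d)`, the closed-form
genus-0 three-vertex count extended to allow zero arguments. -/
noncomputable def C03t (a b d : ℕ) : ℝ :=
  (1 / 2) * (1 + (-1 : ℝ) ^ (a + b + d)) * gfun a * gfun b * gfun d

/-- `C_{1,1}(m) = 2^{(m-4)/2} (m-1)!! / (3 ((m-4)/2)!)` for even `m ≥ 4`, and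
`0` otherwise. -/
noncomputable def C11 (m : ℕ) : ℝ :=
  if 4 ≤ m ∧ Even m then
    2 ^ ((m - 4) / 2) * dfact (m - 1) / (3 * Nat.factorial ((m - 4) / 2))
  else 0

/-- The coefficient `G(m)` built from `C̃_{0,3}` and `C_{1,1}`. -/
noncomputable def Gc (m : ℕ) : ℝ :=
  -(2 / (Nat.factorial 3 : ℝ)) *
    ((∑ μ ∈ comps 3 m, C03t (μ 0) (μ 1) (μ 2) / ((μ 0 : ℝ) * (μ 1) * (μ 2)))
      + (3 / 2) * (∑ μ ∈ comps 2 m, C03t (μ 0) (μ 1) 0 / ((μ 0 : ℝ) * (μ 1)))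
      + (3 / (4 * (m : ℝ))) * C03t 0 0 m)
  - 2 * C11 m / (m : ℝ)

/-!
Put `h μ = g μ / μ` and `H = ∑ h μ tᵐ`; the two composition sums in `G m` are the coefficients
of `H³` and `H²`. Since `h (2p+1) = C(2p,p)` and `2 h (2p) = C(2p,p) - [p = 0]`, we have
`2 H(t) = (P(t²) - 1) + 2t P(t²)` with `P(u) = ∑ C(2n,n) uⁿ`. The formal differential equation
`(1 - 4u) P' = 2P` yields `(1 - 4u) P² = 1` and `P' = 2P³`, so `[uⁿ] P³ = (2n+1) C(2n,n) =: ℓₙ`,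
and extracting even coefficients of `H²` and `H³` gives `G(2k+2) = ℓ_{k+1}/24 - ℓ_k`. At
`u = 1/(2x²)` the series `P` converges to `x/√(x²-2)` (its square is the geometric series
`1/(1-4u)` by the Cauchy product), so the right-hand side is `(P³ - 1)/48 - uP³/2`.
-/

open PowerSeries Finset
open scoped Nat

lemma Nat.cast_succ_mul_centralBinom_succ {R : Type*} [CommSemiring R] (n : ℕ) :
    ((n : R) + 1) * (n + 1).centralBinom = 2 * (2 * n + 1) * n.centralBinom := by
  simpa using congrArg (Nat.cast : ℕ → R) n.succ_mul_centralBinom_succ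

namespace PowerSeries

variable {R : Type*} [CommRing R]

@[simp]
lemma coeff_ofNat_mul (a : ℕ) [a.AtLeastTwo] (F : R⟦X⟧) (n : ℕ) :
    coeff n ((no_index (OfNat.ofNat a) : R⟦X⟧) * F) = OfNat.ofNat a * coeff n F := by
  rw [← map_ofNat C a, coeff_C_mul]

lemma coeff_pow_eq_sum_antidiagonalTuple (F : R⟦X⟧) (k n : ℕ) :
    coeff n (F ^ k) = ∑ μ ∈ Nat.antidiagonalTuple k n, ∏ i, coeff (μ i) F := by
  classical
  rw [← Fin.prod_const, coeff_prod, ← piAntidiag_univ_fin_eq_antidiagonalTuple]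
  refine Finset.sum_equiv Finsupp.equivFunOnFinite (fun l => ?_) (fun _ _ => rfl)
  simp [mem_finsuppAntidiag, mem_piAntidiag, Finsupp.equivFunOnFinite]

lemma coeff_expand_two_of_odd (F : R⟦X⟧) (n : ℕ) :
    coeff (2 * n + 1) (expand 2 two_ne_zero F) = 0 :=
  coeff_expand_of_not_dvd _ _ _ (by omega)

lemma coeff_two_mul_expand_add_X_mul_expand (A B : R⟦X⟧) (n : ℕ) :
    coeff (2 * n) (expand 2 two_ne_zero A + X * expand 2 two_ne_zero B) = coeff n A := by
  rcases n with _ | n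
  · simp
  · rw [map_add, coeff_expand_mul, show 2 * (n + 1) = 2 * n + 1 + 1 by ring, coeff_succ_X_mul,
      coeff_expand_two_of_odd, add_zero]

lemma coeff_two_mul_expand_add_two_X_mul_expand_sq (E O : R⟦X⟧) (n : ℕ) :
    coeff (2 * n) ((expand 2 two_ne_zero E + 2 * X * expand 2 two_ne_zero O) ^ 2) =
      coeff n (E ^ 2 + 4 * X * O ^ 2) := by
  rw [← coeff_two_mul_expand_add_X_mul_expand (E ^ 2 + 4 * X * O ^ 2) (4 * E * O)]
  congr 1
  simp only [map_add, map_mul, map_pow, map_ofNat, expand_X]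
  ring

lemma coeff_two_mul_expand_add_two_X_mul_expand_pow_three (E O : R⟦X⟧) (n : ℕ) :
    coeff (2 * n) ((expand 2 two_ne_zero E + 2 * X * expand 2 two_ne_zero O) ^ 3) =
      coeff n (E ^ 3 + 12 * X * E * O ^ 2) := by
  rw [← coeff_two_mul_expand_add_X_mul_expand (E ^ 3 + 12 * X * E * O ^ 2)
    (6 * E ^ 2 * O + 8 * X * O ^ 3)]
  congr 1
  simp only [map_add, map_mul, map_pow, map_ofNat, expand_X]
  ring

noncomputable def centralBinomSeries : R⟦X⟧ := mk fun n => (n.centralBinom : R)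

@[simp]
lemma coeff_centralBinomSeries (n : ℕ) :
    coeff n (centralBinomSeries : R⟦X⟧) = n.centralBinom := coeff_mk _ _

@[simp]
lemma constantCoeff_centralBinomSeries : constantCoeff (centralBinomSeries : R⟦X⟧) = 1 := by
  simp [← coeff_zero_eq_constantCoeff_apply]

lemma derivative_one_sub_four_X : d⁄dX R (1 - 4 * X) = -4 := by
  rw [← map_ofNat C 4, map_sub, derivative_one, Derivation.leibniz, derivative_C, derivative_X,
    smul_zero, smul_eq_mul, mul_one, add_zero, zero_sub]

lemma one_sub_four_X_mul_derivative_centralBinomSeries :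
    (1 - 4 * X) * d⁄dX R centralBinomSeries = 2 * centralBinomSeries := by
  ext n
  have hrec := Nat.cast_succ_mul_centralBinom_succ (R := R) n
  rcases n with _ | n <;>
  · simp only [sub_mul, one_mul, map_sub, coeff_derivative, coeff_ofNat_mul, mul_assoc,
      coeff_zero_X_mul, coeff_succ_X_mul, coeff_centralBinomSeries]
    push_cast at hrec ⊢
    linear_combination hrec

lemma one_sub_four_X_mul_centralBinomSeries_sq [IsAddTorsionFree R] :
    (1 - 4 * X) * centralBinomSeries ^ 2 = (1 : R⟦X⟧) := by
  apply derivative.ext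
  · rw [Derivation.leibniz, derivative_pow, derivative_one, derivative_one_sub_four_X, smul_eq_mul,
      smul_eq_mul]
    linear_combination
      2 * centralBinomSeries * one_sub_four_X_mul_derivative_centralBinomSeries (R := R)
  · simp

lemma one_sub_four_X_mul_rescale_mk_one : (1 - 4 * X) * rescale (4 : R) (mk 1) = 1 := by
  simpa [mul_comm, rescale_X, map_ofNat C 4] using
    congrArg (rescale (4 : R)) (mk_one_mul_one_sub_eq_one R)

lemma centralBinomSeries_sq [IsAddTorsionFree R] :
    (centralBinomSeries : R⟦X⟧) ^ 2 = rescale 4 (mk 1) := by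
  linear_combination rescale (4 : R) (mk 1) * one_sub_four_X_mul_centralBinomSeries_sq (R := R)
    - centralBinomSeries ^ 2 * one_sub_four_X_mul_rescale_mk_one (R := R)

lemma coeff_centralBinomSeries_sq [IsAddTorsionFree R] (n : ℕ) :
    coeff n ((centralBinomSeries : R⟦X⟧) ^ 2) = 4 ^ n := by
  simp [centralBinomSeries_sq, coeff_rescale]

lemma derivative_centralBinomSeries [IsAddTorsionFree R] :
    d⁄dX R centralBinomSeries = 2 * centralBinomSeries ^ 3 := by
  linear_combination
    centralBinomSeries ^ 2 * one_sub_four_X_mul_derivative_centralBinomSeries (R := R)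
    - d⁄dX R centralBinomSeries * one_sub_four_X_mul_centralBinomSeries_sq (R := R)

lemma coeff_centralBinomSeries_pow_three [IsAddTorsionFree R] (n : ℕ) :
    coeff n ((centralBinomSeries : R⟦X⟧) ^ 3) = (2 * (n : R) + 1) * n.centralBinom := by
  have h := congrArg (coeff n) (derivative_centralBinomSeries (R := R))
  rw [coeff_derivative, coeff_ofNat_mul, coeff_centralBinomSeries] at h
  apply nsmul_right_injective two_ne_zero
  simp only [two_nsmul]
  linear_combination -h + Nat.cast_succ_mul_centralBinom_succ (R := R) n

end PowerSeries

lemma sum_comps_prod_eq_coeff_pow {R : Type*} [CommRing R] (f : ℕ → R) (hf : f 0 = 0) (k m : ℕ) :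
    ∑ μ ∈ comps k m, ∏ i, f (μ i) = coeff m ((mk f) ^ k) := by
  rw [coeff_pow_eq_sum_antidiagonalTuple, comps]
  simp only [coeff_mk]
  refine Finset.sum_filter_of_ne fun μ _ hμ i => ?_
  by_contra h
  exact hμ (Finset.prod_eq_zero (Finset.mem_univ i) (by simp_all))

lemma dfact_eq_doubleFactorial : ∀ n, dfact n = n‼
  | 0 | 1 => rfl
  | n + 2 => by rw [dfact, Nat.doubleFactorial_add_two, dfact_eq_doubleFactorial n]

lemma two_pow_mul_doubleFactorial (p : ℕ) :
    2 ^ p * (2 * p + 1)‼ = (2 * p + 1) * p.centralBinom * p ! := by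
  refine Nat.eq_of_mul_eq_mul_right p.factorial_pos ?_
  have hc := Nat.choose_mul_factorial_mul_factorial (show p ≤ 2 * p by omega)
  rw [show 2 * p - p = p by omega] at hc
  calc 2 ^ p * (2 * p + 1)‼ * p ! = (2 * p + 1)‼ * (2 * p)‼ := by
        rw [Nat.doubleFactorial_two_mul]; ring
    _ = (2 * p + 1) * (2 * p)! := by rw [← Nat.factorial_eq_mul_doubleFactorial, Nat.factorial_succ]
    _ = (2 * p + 1) * p.centralBinom * p ! * p ! := by rw [← hc, Nat.centralBinom]; ring

@[simp]
lemma gfun_zero : gfun 0 = 1 := if_pos rfl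

lemma gfun_two_mul_add_one (p : ℕ) : gfun (2 * p + 1) = (2 * p + 1) * p.centralBinom := by
  rw [gfun, if_neg (by omega), show (2 * p + 1) / 2 = p by omega,
    show (2 * p + 1 - 1) / 2 = p by omega, dfact_eq_doubleFactorial, div_eq_iff (by positivity)]
  exact_mod_cast two_pow_mul_doubleFactorial p

lemma gfun_two_mul_add_two (p : ℕ) : gfun (2 * p + 2) = 2 * (2 * p + 1) * p.centralBinom := by
  rw [gfun, if_neg (by omega), show (2 * p + 2) / 2 = p + 1 by omega,
    show (2 * p + 2 - 1) / 2 = p by omega, dfact_eq_doubleFactorial, div_eq_iff (by positivity)]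
  have h : (2 ^ p * (2 * p + 1)‼ : ℝ) = (2 * p + 1) * p.centralBinom * p ! := by
    exact_mod_cast two_pow_mul_doubleFactorial p
  linear_combination 2 * h

/-- The constant coefficient is the junk value `gfun 0 / 0 = 0`; this is what lets
`sum_comps_prod_eq_coeff_pow` drop the positivity constraint in `comps`. -/
noncomputable def gDivSeries : ℝ⟦X⟧ := mk fun μ => gfun μ / μ

lemma coeff_gDivSeries_two_mul_add_one (p : ℕ) :
    coeff (2 * p + 1) gDivSeries = p.centralBinom := by
  rw [gDivSeries, coeff_mk, gfun_two_mul_add_one]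
  push_cast
  field_simp

lemma coeff_gDivSeries_two_mul_add_two (p : ℕ) :
    coeff (2 * p + 2) gDivSeries = (p + 1).centralBinom / 2 := by
  rw [gDivSeries, coeff_mk, gfun_two_mul_add_two]
  push_cast
  field_simp
  linear_combination -Nat.cast_succ_mul_centralBinom_succ (R := ℝ) p

lemma two_mul_gDivSeries : 2 * gDivSeries = expand 2 two_ne_zero (centralBinomSeries - 1) +
    2 * X * expand 2 two_ne_zero centralBinomSeries := by
  ext n
  obtain ⟨p, rfl | rfl⟩ := Nat.even_or_odd' n
  · rcases p with _ | p
    · simp [gDivSeries]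
    · rw [show 2 * (p + 1) = 2 * p + 1 + 1 by ring, map_add, coeff_ofNat_mul, mul_assoc,
        coeff_ofNat_mul, coeff_succ_X_mul, coeff_expand_two_of_odd,
        coeff_gDivSeries_two_mul_add_two, show 2 * p + 1 + 1 = 2 * (p + 1) by ring,
        coeff_expand_mul, map_sub, coeff_one, if_neg p.succ_ne_zero, coeff_centralBinomSeries]
      ring
  · rw [map_add, coeff_ofNat_mul, mul_assoc, coeff_ofNat_mul, coeff_succ_X_mul,
      coeff_expand_two_of_odd, coeff_expand_mul, coeff_gDivSeries_two_mul_add_one]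
    simp

lemma coeff_gDivSeries_sq (k : ℕ) :
    coeff (2 * (k + 1)) (gDivSeries ^ 2) = 2 * (4 : ℝ) ^ k - (k + 1).centralBinom / 2 := by
  have h := coeff_two_mul_expand_add_two_X_mul_expand_sq (centralBinomSeries - 1 : ℝ⟦X⟧)
    centralBinomSeries (k + 1)
  rw [← two_mul_gDivSeries, show (2 * gDivSeries) ^ 2 = 4 * gDivSeries ^ 2 by ring,
    coeff_ofNat_mul] at h
  set P : ℝ⟦X⟧ := centralBinomSeries with hP
  rw [show (P - 1) ^ 2 + 4 * X * P ^ 2 = P ^ 2 - 2 * P + 1 + 4 * (X * P ^ 2) by ring] at h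
  simp only [hP, map_add, map_sub, coeff_ofNat_mul, coeff_succ_X_mul, coeff_centralBinomSeries_sq,
    coeff_centralBinomSeries, coeff_one, if_neg k.succ_ne_zero, add_zero] at h
  linear_combination h / 4

lemma coeff_gDivSeries_pow_three (k : ℕ) :
    coeff (2 * (k + 1)) (gDivSeries ^ 3) =
      2 * (2 * (k : ℝ) + 1) * k.centralBinom - 3 * (4 : ℝ) ^ k + (k + 1).centralBinom / 2 := by
  have h := coeff_two_mul_expand_add_two_X_mul_expand_pow_three (centralBinomSeries - 1 : ℝ⟦X⟧)
    centralBinomSeries (k + 1)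
  rw [← two_mul_gDivSeries, show (2 * gDivSeries) ^ 3 = 8 * gDivSeries ^ 3 by ring,
    coeff_ofNat_mul] at h
  set P : ℝ⟦X⟧ := centralBinomSeries with hP
  rw [show (P - 1) ^ 3 + 12 * X * (P - 1) * P ^ 2 =
      P ^ 3 - 3 * P ^ 2 + 3 * P - 1 + 12 * (X * (P ^ 3 - P ^ 2)) by ring] at h
  simp only [hP, map_add, map_sub, coeff_ofNat_mul, coeff_succ_X_mul, coeff_centralBinomSeries_sq,
    coeff_centralBinomSeries_pow_three, coeff_centralBinomSeries, coeff_one,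
    if_neg k.succ_ne_zero, sub_zero] at h
  push_cast at h
  linear_combination h / 8 + Nat.cast_succ_mul_centralBinom_succ (R := ℝ) k / 4

lemma C03t_div_of_even {a b d : ℕ} (h : Even (a + b + d)) :
    C03t a b d / (a * b * d) = gfun a / a * (gfun b / b) * (gfun d / d) := by
  rw [C03t, h.neg_one_pow]
  field_simp
  ring

lemma C03t_zero_div_of_even {a b : ℕ} (h : Even (a + b)) :
    C03t a b 0 / (a * b) = gfun a / a * (gfun b / b) := by
  rw [C03t, add_zero, h.neg_one_pow, gfun_zero]
  field_simp
  ring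

lemma sum_comps_three_C03t {m : ℕ} (hm : Even m) :
    ∑ μ ∈ comps 3 m, C03t (μ 0) (μ 1) (μ 2) / ((μ 0 : ℝ) * (μ 1) * (μ 2)) =
      coeff m (gDivSeries ^ 3) := by
  rw [gDivSeries, ← sum_comps_prod_eq_coeff_pow _ (by simp)]
  refine Finset.sum_congr rfl fun μ hμ => ?_
  have hsum : μ 0 + μ 1 + μ 2 = m := by
    simpa [comps, Nat.mem_antidiagonalTuple, Fin.sum_univ_three] using (Finset.mem_filter.1 hμ).1
  rw [C03t_div_of_even (hsum ▸ hm), Fin.prod_univ_three]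

lemma sum_comps_two_C03t {m : ℕ} (hm : Even m) :
    ∑ μ ∈ comps 2 m, C03t (μ 0) (μ 1) 0 / ((μ 0 : ℝ) * (μ 1)) = coeff m (gDivSeries ^ 2) := by
  rw [gDivSeries, ← sum_comps_prod_eq_coeff_pow _ (by simp)]
  refine Finset.sum_congr rfl fun μ hμ => ?_
  have hsum : μ 0 + μ 1 = m := by
    simpa [comps, Nat.mem_antidiagonalTuple, Fin.sum_univ_two] using (Finset.mem_filter.1 hμ).1
  rw [C03t_zero_div_of_even (hsum ▸ hm), Fin.prod_univ_two]

lemma C11_two_mul_succ (k : ℕ) : C11 (2 * (k + 1)) = k * (2 * k + 1) * k.centralBinom / 6 := by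
  rcases k with _ | j
  · simp [C11]
  · rw [C11, if_pos ⟨by omega, ⟨j + 2, by ring⟩⟩, show (2 * (j + 1 + 1) - 4) / 2 = j by omega,
      show 2 * (j + 1 + 1) - 1 = 2 * (j + 1) + 1 by omega, dfact_eq_doubleFactorial,
      div_eq_iff (by positivity)]
    have h : (2 ^ (j + 1) * (2 * (j + 1) + 1)‼ : ℝ) =
        (2 * (j + 1) + 1) * (j + 1).centralBinom * (j + 1)! := by
      exact_mod_cast two_pow_mul_doubleFactorial (j + 1)
    rw [Nat.factorial_succ] at h
    push_cast at h ⊢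
    linear_combination h / 2

lemma Gc_two_mul_succ (k : ℕ) :
    Gc (2 * (k + 1)) = (2 * (k + 1 : ℝ) + 1) * (k + 1).centralBinom / 24 -
      (2 * k + 1) * k.centralBinom := by
  have hm : Even (2 * (k + 1)) := even_two_mul _
  have h00 : C03t 0 0 (2 * (k + 1)) = 2 * (2 * k + 1) * k.centralBinom := by
    rw [C03t, zero_add, zero_add, hm.neg_one_pow, show 2 * (k + 1) = 2 * k + 2 by ring,
      gfun_two_mul_add_two, gfun_zero]
    ring
  have hnext : ((k + 1).centralBinom : ℝ) = 2 * (2 * k + 1) * k.centralBinom / (k + 1) := by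
    rw [eq_div_iff (by positivity)]
    linear_combination Nat.cast_succ_mul_centralBinom_succ (R := ℝ) k
  rw [Gc, sum_comps_three_C03t hm, sum_comps_two_C03t hm, coeff_gDivSeries_pow_three,
    coeff_gDivSeries_sq, C11_two_mul_succ, h00, Nat.factorial, hnext]
  push_cast
  field_simp
  ring

lemma PowerSeries.hasSum_coeff_mul_mul_pow {R : Type*} [NormedCommRing R] {A B : R⟦X⟧} {y a b : R}
    (ha : HasSum (fun n => coeff n A * y ^ n) a) (hb : HasSum (fun n => coeff n B * y ^ n) b)
    (hA : Summable fun n => ‖coeff n A * y ^ n‖) (hB : Summable fun n => ‖coeff n B * y ^ n‖) :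
    HasSum (fun n => coeff n (A * B) * y ^ n) (a * b) := by
  have hprod :=
    tsum_mul_tsum_eq_tsum_sum_antidiagonal_of_summable_norm' hA ha.summable hB hb.summable
  rw [ha.tsum_eq, hb.tsum_eq] at hprod
  have hcoeff : (fun n => coeff n (A * B) * y ^ n) =
      fun n => ∑ kl ∈ antidiagonal n, coeff kl.1 A * y ^ kl.1 * (coeff kl.2 B * y ^ kl.2) := by
    funext n
    rw [coeff_mul, Finset.sum_mul]
    refine Finset.sum_congr rfl fun kl hkl => ?_
    rw [← mem_antidiagonal.1 hkl, pow_add]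
    ring
  rw [hcoeff, hprod]
  exact (summable_sum_mul_antidiagonal_of_summable_norm' hA ha.summable hB hb.summable).hasSum

lemma summable_norm_coeff_centralBinomSeries_mul_pow {y : ℝ} (hy0 : 0 ≤ y) (hy : 4 * y < 1) :
    Summable fun n => ‖coeff n (centralBinomSeries : ℝ⟦X⟧) * y ^ n‖ := by
  refine (summable_geometric_of_lt_one (by positivity) hy).of_nonneg_of_le (fun _ => norm_nonneg _)
    fun n => ?_
  rw [coeff_centralBinomSeries, norm_mul, Real.norm_natCast, norm_pow, Real.norm_of_nonneg hy0,
    mul_pow]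
  gcongr
  exact_mod_cast n.centralBinom_le_four_pow

lemma hasSum_coeff_centralBinomSeries_sq_mul_pow {y : ℝ} (hy0 : 0 ≤ y) (hy : 4 * y < 1) :
    HasSum (fun n => coeff n ((centralBinomSeries : ℝ⟦X⟧) ^ 2) * y ^ n) (1 - 4 * y)⁻¹ := by
  simpa only [coeff_centralBinomSeries_sq, ← mul_pow] using
    hasSum_geometric_of_lt_one (by positivity) hy

lemma summable_norm_coeff_centralBinomSeries_sq_mul_pow {y : ℝ} (hy0 : 0 ≤ y) (hy : 4 * y < 1) :
    Summable fun n => ‖coeff n ((centralBinomSeries : ℝ⟦X⟧) ^ 2) * y ^ n‖ := by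
  simpa only [coeff_centralBinomSeries_sq, ← mul_pow, norm_pow,
    Real.norm_of_nonneg (by positivity : 0 ≤ 4 * y)] using
    summable_geometric_of_lt_one (by positivity) hy

lemma hasSum_coeff_centralBinomSeries_mul_pow {y : ℝ} (hy0 : 0 ≤ y) (hy : 4 * y < 1) :
    HasSum (fun n => coeff n (centralBinomSeries : ℝ⟦X⟧) * y ^ n) (√(1 - 4 * y))⁻¹ := by
  have hnorm := summable_norm_coeff_centralBinomSeries_mul_pow hy0 hy
  have hS := hnorm.of_norm.hasSum
  set S := ∑' n, coeff n (centralBinomSeries : ℝ⟦X⟧) * y ^ n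
  have hsq : S * S = (1 - 4 * y)⁻¹ :=
    (hasSum_coeff_mul_mul_pow hS hS hnorm hnorm).unique
      (by simpa only [← sq] using hasSum_coeff_centralBinomSeries_sq_mul_pow hy0 hy)
  have hS1 : 1 ≤ S := by
    simpa using le_hasSum hS 0 fun n _ => by rw [coeff_centralBinomSeries]; positivity
  rwa [← Real.sqrt_inv, ← hsq, Real.sqrt_mul_self (by linarith)]

lemma hasSum_coeff_centralBinomSeries_pow_three_mul_pow {y : ℝ} (hy0 : 0 ≤ y) (hy : 4 * y < 1) :
    HasSum (fun n => coeff n ((centralBinomSeries : ℝ⟦X⟧) ^ 3) * y ^ n) ((√(1 - 4 * y))⁻¹ ^ 3) := by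
  have h := hasSum_coeff_mul_mul_pow (hasSum_coeff_centralBinomSeries_mul_pow hy0 hy)
    (hasSum_coeff_centralBinomSeries_sq_mul_pow hy0 hy)
    (summable_norm_coeff_centralBinomSeries_mul_pow hy0 hy)
    (summable_norm_coeff_centralBinomSeries_sq_mul_pow hy0 hy)
  have hval : (√(1 - 4 * y))⁻¹ * (1 - 4 * y)⁻¹ = (√(1 - 4 * y))⁻¹ ^ 3 := by
    rw [pow_succ', inv_pow, Real.sq_sqrt (by linarith)]
  rwa [← pow_succ', hval] at h

lemma hasSum_half_Gc_mul_pow {y : ℝ} (hy0 : 0 ≤ y) (hy : 4 * y < 1) :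
    HasSum (fun k : ℕ => (1 / 2) * Gc (2 * (k + 1)) * y ^ (k + 1))
      (((√(1 - 4 * y))⁻¹ ^ 3 - 1) / 48 - y * (√(1 - 4 * y))⁻¹ ^ 3 / 2) := by
  set L := (√(1 - 4 * y))⁻¹ ^ 3
  have hL : HasSum (fun n : ℕ => (2 * (n : ℝ) + 1) * n.centralBinom * y ^ n) L := by
    simpa only [coeff_centralBinomSeries_pow_three] using
      hasSum_coeff_centralBinomSeries_pow_three_mul_pow hy0 hy
  have hshift : HasSum
      (fun k : ℕ => (2 * ((k + 1 : ℕ) : ℝ) + 1) * (k + 1).centralBinom * y ^ (k + 1)) (L - 1) := by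
    simpa using (hasSum_nat_add_iff' 1).mpr hL
  refine ((hshift.div_const 48).sub ((hL.mul_left y).div_const 2)).congr_fun fun k => ?_
  rw [Gc_two_mul_succ]
  push_cast
  ring

/-- with `c² = 2`, the WKB coefficient
`S₂(x) = (x³ - 12x)/(48(x² - 2)^{3/2})` has the convergent expansion
`1/48 + (1/2) Σ_{k≥1} G(2k) (2x²)^{-k}` for `x > √2`. -/
theorem stmt19 :
    ∀ x : ℝ, Real.sqrt 2 < x →
      HasSum (fun k : ℕ => (1 / 2) * Gc (2 * (k + 1)) * ((2 * x ^ 2)⁻¹) ^ (k + 1))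
        ((x ^ 3 - 12 * x) / (48 * Real.sqrt (x ^ 2 - 2) ^ 3) - 1 / 48) := by
  intro x hx
  have hx0 : 0 < x := (Real.sqrt_nonneg 2).trans_lt hx
  have hx2 : 2 < x ^ 2 := by
    simpa using (Real.sqrt_lt' hx0).1 hx
  have hy : 4 * (2 * x ^ 2)⁻¹ < 1 := by
    rw [← div_eq_mul_inv, div_lt_one (by positivity)]; linarith
  have hsqrt : √(1 - 4 * (2 * x ^ 2)⁻¹) = √(x ^ 2 - 2) / x := by
    rw [show 1 - 4 * (2 * x ^ 2)⁻¹ = (x ^ 2 - 2) / x ^ 2 by field_simp; ring,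
      Real.sqrt_div' _ (sq_nonneg x), Real.sqrt_sq hx0.le]
  convert hasSum_half_Gc_mul_pow (by positivity) hy using 1
  rw [hsqrt]
  have hs : 0 < √(x ^ 2 - 2) := Real.sqrt_pos.2 (by linarith)
  field_simp
  ring
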